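/- arXiv:2210.11812 — 2 statements merged into one kernel-verified Lean document; each statement's English description precedes it below -/
import Mathlib

section
/- Let b ≥ 4, γ ∈ (2,3) and T > 0. There exists a constant C > 0, depending only on b and γ, such that for every càdlàg (right-continuous with left limits) function F : [0,T] → ℝ, every a > 0 and every δ > 0 one has sup_{0≤σ,τ≤T, |τ−σ|≤δ} |F(τ) − F(σ)| ≤ 2 sup_{0≤σ,τ≤T, |τ−σ|≤2a} |F(τ) − F(σ)| + C · B_a(F)^{1/b} · δ^{(γ−2)/b}. -/
/-!
Extending `F` by constants outside `[0,T]` gives a function on `ℝ` that is right-continuous with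
left limits everywhere, hence Borel and bounded, so the integrand `k` of `B_a` is integrable.

Points at distance at most `4a` are joined through their midpoint, at cost `2M`. For `t - s > 4a`
we chain from both ends in the manner of Garsia–Rodemich–Rumsey: with `r = (t - s)/4`, pick points
at distance `≈ r/4ⁿ` from `s` (resp. `t`) at which, by Chebyshev's inequality, both `∫ k(u, ·)` and
the kernel to the previous point are at most a constant times their averages. Successive points are
more than `a` apart, so `|F u - F v|ᵇ = k(u,v) |u - v|^γ ≲ B_a r^(γ-2)` at scale `r`, and since
`γ > 2` these increments sum geometrically. The chains stop at scale `≈ a`, from where each endpoint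
is reached at cost `M`.
-/

open MeasureTheory Real Filter Topology Set

noncomputable section

/-- `B_a(F) = ∫_0^T ∫_0^T |F(τ) - F(σ)|^b / |τ - σ|^γ 1_{|τ-σ| > a} dσ dτ`. -/
def Ba (T b γ a : ℝ) (F : ℝ → ℝ) : ℝ :=
  ∫ τ in Set.Icc (0 : ℝ) T, ∫ σ in Set.Icc (0 : ℝ) T,
    (if a < |τ - σ| then |F τ - F σ| ^ b / |τ - σ| ^ γ else 0)

theorem measurable_of_continuousWithinAt_Ici {β : Type*} [TopologicalSpace β]
    [TopologicalSpace.PseudoMetrizableSpace β] [MeasurableSpace β] [BorelSpace β] {f : ℝ → β}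
    (hf : ∀ x, ContinuousWithinAt f (Ici x) x) : Measurable f := by
  set grid : ℕ → ℝ → ℝ := fun n x => ⌈x * (n + 1)⌉ / (n + 1)
  have hgrid : ∀ n x, x ≤ grid n x ∧ grid n x ≤ x + 1 / (n + 1) := by
    intro n x
    have hn : (0 : ℝ) < n + 1 := by positivity
    constructor
    · rw [le_div_iff₀ hn]; exact Int.le_ceil _
    · rw [div_le_iff₀ hn, add_mul, one_div_mul_cancel hn.ne']; exact (Int.ceil_lt_add_one _).le
  refine measurable_of_tendsto_metrizable (f := fun n x => f (grid n x)) (fun n => ?_) ?_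
  · exact (measurable_of_countable fun k : ℤ => f (k / (n + 1))).comp
      (Int.measurable_ceil.comp (measurable_id.mul_const _))
  · refine tendsto_pi_nhds.2 fun x => (hf x).tendsto.comp (tendsto_nhdsWithin_iff.2 ⟨?_, ?_⟩)
    · refine tendsto_of_tendsto_of_tendsto_of_le_of_le tendsto_const_nhds ?_
        (fun n => (hgrid n x).1) (fun n => (hgrid n x).2)
      simpa using tendsto_one_div_add_atTop_nhds_zero_nat.const_add x
    · exact Eventually.of_forall fun n => (hgrid n x).1

theorem isBounded_image_of_continuousWithinAt_Ici_of_tendsto_nhdsLT {f : ℝ → ℝ} {K : Set ℝ}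
    (hK : IsCompact K) (hr : ∀ x, ContinuousWithinAt f (Ici x) x)
    (hl : ∀ x, ∃ l, Tendsto f (𝓝[<] x) (𝓝 l)) : Bornology.IsBounded (f '' K) := by
  refine Bornology.isBounded_image_of_isLocallyBounded_of_isCompact hK fun x => ?_
  obtain ⟨l, hl⟩ := hl x
  obtain ⟨s₁, hs₁, hb₁⟩ := Metric.exists_isBounded_image_of_tendsto hl
  obtain ⟨s₂, hs₂, hb₂⟩ := Metric.exists_isBounded_image_of_tendsto (hr x).tendsto
  refine ⟨s₁ ∪ s₂, ?_, by simpa only [image_union] using hb₁.union hb₂⟩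
  rw [← nhdsLT_sup_nhdsGE]
  exact union_mem_sup hs₁ hs₂

section IccExtend

variable {T : ℝ} {F : ℝ → ℝ}

theorem continuousWithinAt_Ici_IccExtend (hT : 0 ≤ T)
    (hr : ∀ t ∈ Ico 0 T, ContinuousWithinAt F (Ici t) t) (x : ℝ) :
    ContinuousWithinAt (IccExtend hT (F ∘ (↑))) (Ici x) x := by
  set p : ℝ := ↑(projIcc 0 T hT x)
  have hp : ContinuousWithinAt F (Ici p ∩ Icc 0 T) p := by
    rcases (projIcc 0 T hT x).2.2.lt_or_eq with hpT | hpT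
    · exact (hr p ⟨(projIcc 0 T hT x).2.1, hpT⟩).mono inter_subset_left
    · refine continuousWithinAt_singleton.mono fun y hy => ?_
      exact le_antisymm (hy.2.2.trans_eq hpT.symm) hy.1
  exact hp.comp (f := fun y => (projIcc 0 T hT y : ℝ))
    (continuous_subtype_val.comp continuous_projIcc).continuousWithinAt
    fun y hy => ⟨monotone_projIcc hT (show x ≤ y from hy), (projIcc 0 T hT y).2⟩

theorem exists_tendsto_nhdsLT_IccExtend (hT : 0 ≤ T)
    (hl : ∀ t ∈ Ioc 0 T, ∃ l, Tendsto F (𝓝[<] t) (𝓝 l)) (x : ℝ) :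
    ∃ l, Tendsto (IccExtend hT (F ∘ (↑))) (𝓝[<] x) (𝓝 l) := by
  rcases le_or_gt x 0 with hx | hx
  · refine ⟨F 0, tendsto_const_nhds.congr' (eventuallyEq_nhdsWithin_of_eqOn fun y hy => ?_)⟩
    simp [IccExtend_of_le_left hT _ (hy.out.le.trans hx)]
  rcases le_or_gt x T with hxT | hxT
  · obtain ⟨l, hl⟩ := hl x ⟨hx, hxT⟩
    refine ⟨l, hl.congr' (mem_of_superset (Ioo_mem_nhdsLT hx) fun y hy => ?_)⟩
    simp [IccExtend_of_mem hT _ ⟨hy.1.le, hy.2.le.trans hxT⟩]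
  · refine ⟨F T, tendsto_const_nhds.congr' (mem_of_superset (Ioo_mem_nhdsLT hxT) fun y hy => ?_)⟩
    simp [IccExtend_of_right_le hT _ hy.1.le]

theorem exists_measurable_bounded_eqOn_Icc (hT : 0 ≤ T)
    (hr : ∀ t ∈ Ico 0 T, ContinuousWithinAt F (Ici t) t)
    (hl : ∀ t ∈ Ioc 0 T, ∃ l, Tendsto F (𝓝[<] t) (𝓝 l)) :
    ∃ φ : ℝ → ℝ, Measurable φ ∧ (∃ K, ∀ x, |φ x| ≤ K) ∧ EqOn φ F (Icc 0 T) := by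
  set φ := IccExtend hT (F ∘ (↑))
  have hφr := continuousWithinAt_Ici_IccExtend hT hr
  obtain ⟨K, hK⟩ := (isBounded_image_of_continuousWithinAt_Ici_of_tendsto_nhdsLT isCompact_Icc hφr
    (exists_tendsto_nhdsLT_IccExtend hT hl)).exists_norm_le
  refine ⟨φ, measurable_of_continuousWithinAt_Ici hφr, ⟨K, fun x => ?_⟩,
    fun x hx => IccExtend_of_mem hT _ hx⟩
  have hx : φ x = φ (projIcc 0 T hT x) := by
    simp only [φ, IccExtend, Function.comp_apply, projIcc_val]
  exact hx ▸ hK _ (mem_image_of_mem _ (projIcc 0 T hT x).2)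

end IccExtend

def grrKernel (a b γ : ℝ) (F : ℝ → ℝ) (τ σ : ℝ) : ℝ :=
  if a < |τ - σ| then |F τ - F σ| ^ b / |τ - σ| ^ γ else 0

def grrMarginal (T a b γ : ℝ) (F : ℝ → ℝ) (τ : ℝ) : ℝ :=
  ∫ σ in Icc 0 T, grrKernel a b γ F τ σ

section Kernel

variable {a b γ T K : ℝ} {F G : ℝ → ℝ} {τ σ : ℝ}

theorem Ba_eq_integral_grrMarginal :
    Ba T b γ a F = ∫ τ in Icc 0 T, grrMarginal T a b γ F τ := rfl

theorem Ba_congr (h : EqOn F G (Icc 0 T)) : Ba T b γ a F = Ba T b γ a G := by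
  refine setIntegral_congr_fun measurableSet_Icc fun τ hτ => ?_
  refine setIntegral_congr_fun measurableSet_Icc fun σ hσ => ?_
  simp only [h hτ, h hσ]

theorem grrKernel_nonneg : 0 ≤ grrKernel a b γ F τ σ := by
  unfold grrKernel; split_ifs <;> positivity

theorem grrKernel_comm : grrKernel a b γ F τ σ = grrKernel a b γ F σ τ := by
  simp only [grrKernel, abs_sub_comm τ σ, abs_sub_comm (F τ) (F σ)]

theorem grrMarginal_nonneg : 0 ≤ grrMarginal T a b γ F τ :=
  setIntegral_nonneg measurableSet_Icc fun _ _ => grrKernel_nonneg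

theorem Ba_nonneg : 0 ≤ Ba T b γ a F :=
  setIntegral_nonneg measurableSet_Icc fun _ _ => grrMarginal_nonneg

theorem abs_sub_rpow_eq_grrKernel_mul (ha : 0 ≤ a) (h : a < |τ - σ|) :
    |F τ - F σ| ^ b = grrKernel a b γ F τ σ * |τ - σ| ^ γ := by
  rw [grrKernel, if_pos h, div_mul_cancel₀ _ (rpow_pos_of_pos (ha.trans_lt h) _).ne']

theorem grrKernel_le (hK : ∀ x, |F x| ≤ K) (ha : 0 < a) (hb : 0 ≤ b) (hγ : 0 ≤ γ) :
    grrKernel a b γ F τ σ ≤ (2 * K) ^ b / a ^ γ := by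
  have hK₀ : 0 ≤ K := (abs_nonneg _).trans (hK 0)
  unfold grrKernel
  split_ifs with h
  · gcongr
    exact (abs_sub _ _).trans (by linarith [hK τ, hK σ])
  · positivity

theorem measurable_grrKernel (hF : Measurable F) :
    Measurable (Function.uncurry (grrKernel a b γ F)) := by
  unfold grrKernel
  refine Measurable.ite (measurableSet_lt measurable_const (by fun_prop)) ?_ measurable_const
  fun_prop

theorem integrableOn_grrKernel (hF : Measurable F) (hK : ∀ x, |F x| ≤ K) (ha : 0 < a)
    (hb : 0 ≤ b) (hγ : 0 ≤ γ) : IntegrableOn (grrKernel a b γ F τ) (Icc 0 T) := by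
  refine Measure.integrableOn_of_bounded (M := (2 * K) ^ b / a ^ γ) measure_Icc_lt_top.ne
    ((measurable_grrKernel hF).comp measurable_prodMk_left).aestronglyMeasurable
    (Eventually.of_forall fun σ => ?_)
  rw [Real.norm_of_nonneg grrKernel_nonneg]
  exact grrKernel_le hK ha hb hγ

theorem integrableOn_grrMarginal (hF : Measurable F) (hK : ∀ x, |F x| ≤ K) (ha : 0 < a)
    (hb : 0 ≤ b) (hγ : 0 ≤ γ) : IntegrableOn (grrMarginal T a b γ F) (Icc 0 T) := by
  refine Measure.integrableOn_of_bounded (M := (2 * K) ^ b / a ^ γ * volume.real (Icc 0 T))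
    measure_Icc_lt_top.ne
    (measurable_grrKernel hF).stronglyMeasurable.integral_prod_right'.aestronglyMeasurable
    (Eventually.of_forall fun τ => ?_)
  exact norm_setIntegral_le_of_norm_le_const measure_Icc_lt_top fun σ _ => by
    rw [Real.norm_of_nonneg grrKernel_nonneg]; exact grrKernel_le hK ha hb hγ

end Kernel

section Chebyshev

variable {α : Type*} [MeasurableSpace α] {μ : Measure α} {S : Set α} {f g : α → ℝ}

theorem measureReal_restrict_setOf_lt_le (hμS : μ S ≠ ⊤) (hμS₀ : μ S ≠ 0) (hf : IntegrableOn f S μ)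
    (hf₀ : 0 ≤ᵐ[μ.restrict S] f) {c : ℝ} (hc : 0 < c) :
    (μ.restrict S).real {x | c * (∫ x in S, f x ∂μ) / μ.real S < f x} ≤ μ.real S / c := by
  have hℓ : 0 < μ.real S := ENNReal.toReal_pos hμS₀ hμS
  rcases (integral_nonneg_of_ae hf₀).eq_or_lt with hA | hA
  · have hnull : (μ.restrict S) {x | 0 < f x} = 0 := measure_mono_null (fun x hx => ne_of_gt hx)
      (ae_iff.1 ((integral_eq_zero_iff_of_nonneg_ae hf₀ hf).1 hA.symm))
    rw [← hA, mul_zero, zero_div, measureReal_def, hnull, ENNReal.toReal_zero]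
    positivity
  · have : IsFiniteMeasure (μ.restrict S) := isFiniteMeasure_restrict.2 hμS
    have hmarkov := mul_meas_ge_le_integral_of_nonneg hf₀ hf (c * (∫ x in S, f x ∂μ) / μ.real S)
    have hmono := measureReal_mono (μ := μ.restrict S)
      (ofPred_subset_ofPred.2 fun x (hx : c * (∫ x in S, f x ∂μ) / μ.real S < f x) => hx.le)
    rw [div_mul_eq_mul_div, div_le_iff₀ hℓ] at hmarkov
    rw [le_div_iff₀ hc]
    refine le_of_mul_le_mul_left ?_ hA
    nlinarith [mul_le_mul_of_nonneg_left hmono (by positivity : 0 ≤ c * ∫ x in S, f x ∂μ)]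

theorem exists_mem_le_four_mul_setIntegral_div (hμS : μ S ≠ ⊤) (hμS₀ : μ S ≠ 0)
    (hf : IntegrableOn f S μ) (hg : IntegrableOn g S μ)
    (hf₀ : 0 ≤ᵐ[μ.restrict S] f) (hg₀ : 0 ≤ᵐ[μ.restrict S] g) :
    ∃ x ∈ S, f x ≤ 4 * (∫ x in S, f x ∂μ) / μ.real S ∧
      g x ≤ 4 * (∫ x in S, g x ∂μ) / μ.real S := by
  have : IsFiniteMeasure (μ.restrict S) := isFiniteMeasure_restrict.2 hμS
  by_contra! hbad
  have hcover : S ⊆ {x | 4 * (∫ x in S, f x ∂μ) / μ.real S < f x} ∪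
      {x | 4 * (∫ x in S, g x ∂μ) / μ.real S < g x} := fun x hx =>
    (le_or_gt _ _).imp (hbad x hx) id |>.symm
  have hS := (measureReal_mono (μ := μ.restrict S) hcover).trans (measureReal_union_le _ _)
  rw [measureReal_restrict_apply_self] at hS
  have := measureReal_restrict_setOf_lt_le hμS hμS₀ hf hf₀ four_pos
  have := measureReal_restrict_setOf_lt_le hμS hμS₀ hg hg₀ four_pos
  have : 0 < μ.real S := ENNReal.toReal_pos hμS₀ hμS
  linarith

end Chebyshev

-- For `ε = ±1`: the points on the `ε`-side of `c` at distance between `r` and `5r/4` from it.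
def window (c ε r : ℝ) : Set ℝ := (fun u => ε * (u - c)) ⁻¹' Icc r (5 / 4 * r)

section Window

variable {c ε r u v : ℝ}

theorem volume_window (hε : |ε| = 1) : volume (window c ε r) = ENNReal.ofReal (r / 4) := by
  have hε₀ : ε ≠ 0 := by rintro rfl; simp at hε
  have : window c ε r = (· + -c) ⁻¹' ((ε * ·) ⁻¹' Icc r (5 / 4 * r)) := by
    ext u; simp [window, sub_eq_add_neg]
  rw [this, measure_preimage_add_right, Real.volume_preimage_mul_left hε₀, abs_inv, hε, inv_one,
    ENNReal.ofReal_one, one_mul, Real.volume_Icc]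
  ring_nf

theorem abs_sub_le_of_mem_window (hε : |ε| = 1) (hu : u ∈ window c ε r) :
    |u - c| ≤ 5 / 4 * r := by
  rw [← one_mul |u - c|, ← hε, ← abs_mul]
  exact abs_le.2 ⟨by linarith [hu.1, hu.2], hu.2⟩

theorem abs_sub_mem_Icc_of_mem_window (hε : |ε| = 1) (hu : u ∈ window c ε r)
    (hv : v ∈ window c ε (r / 4)) : |u - v| ∈ Icc (11 / 16 * r) r := by
  obtain ⟨⟨hu₁, hu₂⟩, ⟨hv₁, hv₂⟩⟩ := And.intro hu hv
  have : |u - v| = |ε * (u - c) - ε * (v - c)| := by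
    rw [← mul_sub, abs_mul, hε, one_mul, sub_sub_sub_cancel_right]
  rw [this, abs_of_nonneg (by linarith)]
  constructor <;> linarith

theorem window_subset_uIcc (hε : |ε| = 1) {R : ℝ} (hrR : 5 / 4 * r ≤ R) :
    window c ε r ⊆ uIcc c (c + ε * R) := by
  intro u ⟨hu₁, hu₂⟩
  simp only at hu₁ hu₂
  rcases (abs_eq zero_le_one).1 hε with rfl | rfl
  · rw [uIcc_of_le (by linarith)]; constructor <;> linarith
  · rw [uIcc_of_ge (by linarith)]; constructor <;> linarith

end Window

theorem sum_range_rpow_div_four_pow_le {r e : ℝ} (hr : 0 ≤ r) (he : 0 < e) (m : ℕ) :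
    ∑ n ∈ Finset.range m, (r / 4 ^ (n + 1)) ^ e ≤ r ^ e / (4 ^ e - 1) := by
  have h4e : 1 < (4 : ℝ) ^ e := one_lt_rpow (by norm_num) he
  set q : ℝ := ((4 : ℝ) ^ e)⁻¹
  have hq₀ : 0 ≤ q := by positivity
  have hq₁ : q < 1 := inv_lt_one_of_one_lt₀ h4e
  have hterm : ∀ n : ℕ, (r / 4 ^ (n + 1)) ^ e = r ^ e * q ^ (n + 1) := fun n => by
    rw [div_rpow hr (by positivity), ← rpow_pow_comm (by norm_num), inv_pow, div_eq_mul_inv]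
  have hgeom : ∑ n ∈ Finset.range m, q ^ (n + 1) ≤ q / (1 - q) := by
    simpa [Finset.sum_Ico_eq_sum_range, add_comm] using
      geom_sum_Ico_le_of_lt_one (m := 1) (n := m + 1) hq₀ hq₁
  calc ∑ n ∈ Finset.range m, (r / 4 ^ (n + 1)) ^ e
      = r ^ e * ∑ n ∈ Finset.range m, q ^ (n + 1) := by simp only [hterm, Finset.mul_sum]
    _ ≤ r ^ e * (q / (1 - q)) := by gcongr
    _ = r ^ e / (4 ^ e - 1) := by
      rw [div_eq_mul_one_div (r ^ e)]
      congr 1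
      have h4 : q * 4 ^ e = 1 := inv_mul_cancel₀ (by positivity)
      have : (4 : ℝ) ^ e - 1 ≠ 0 := by linarith
      have : 1 - q ≠ 0 := by linarith
      field_simp
      linear_combination h4

theorem exists_div_pow_mem_Ico {r θ q : ℝ} (hθ : 0 < θ) (hθr : θ ≤ r) (hq : 1 < q) :
    ∃ m : ℕ, r / q ^ m ∈ Ico θ (q * θ) := by
  obtain ⟨m, hm₁, hm₂⟩ := exists_nat_pow_near ((one_le_div hθ).2 hθr) hq
  have hqm : 0 < q ^ m := pow_pos (by linarith) m
  rw [le_div_iff₀ hθ] at hm₁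
  rw [div_lt_iff₀ hθ, pow_succ] at hm₂
  exact ⟨m, (le_div_iff₀ hqm).2 (by linarith), (div_lt_iff₀ hqm).2 (by linarith)⟩

section Chaining

variable {T a b γ c ε r u v x₀ : ℝ} {φ : ℝ → ℝ}

theorem exists_mem_window_grrMarginal_le
    (hk : ∀ τ, IntegrableOn (grrKernel a b γ φ τ) (Icc 0 T))
    (hG : IntegrableOn (grrMarginal T a b γ φ) (Icc 0 T))
    (hε : |ε| = 1) (hr : 0 < r) (hW : window c ε r ⊆ Icc 0 T) (p : ℝ) :
    ∃ u ∈ window c ε r, grrMarginal T a b γ φ u ≤ 16 * Ba T b γ a φ / r ∧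
      grrKernel a b γ φ p u ≤ 16 * grrMarginal T a b γ φ p / r := by
  have hvol : volume.real (window c ε r) = r / 4 := by
    rw [measureReal_def, volume_window hε, ENNReal.toReal_ofReal (by positivity)]
  obtain ⟨u, hu, hGu, hku⟩ := exists_mem_le_four_mul_setIntegral_div (volume_window hε ▸
    ENNReal.ofReal_ne_top) (by rw [volume_window hε]; simpa using hr) (hG.mono_set hW)
    ((hk p).mono_set hW) (ae_of_all _ fun _ => grrMarginal_nonneg)
    (ae_of_all _ fun _ => grrKernel_nonneg)
  rw [hvol] at hGu hku
  have hB : ∫ x in window c ε r, grrMarginal T a b γ φ x ≤ Ba T b γ a φ := by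
    rw [Ba_eq_integral_grrMarginal]
    exact setIntegral_mono_set hG (ae_of_all _ fun _ => grrMarginal_nonneg) hW.eventuallyLE
  have hGp : ∫ x in window c ε r, grrKernel a b γ φ p x ≤ grrMarginal T a b γ φ p :=
    setIntegral_mono_set (hk p) (ae_of_all _ fun _ => grrKernel_nonneg) hW.eventuallyLE
  refine ⟨u, hu, hGu.trans ?_, hku.trans ?_⟩ <;>
  · rw [show ∀ X : ℝ, 4 * X / (r / 4) = 16 * X / r from fun X => by ring]
    gcongr

theorem abs_sub_le_of_grrKernel_le (ha : 0 ≤ a) (hb : 0 < b) (hγ : 0 ≤ γ) {B : ℝ} (hB : 0 ≤ B)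
    (hr : 0 < r) (h₁ : a < |u - v|) (h₂ : |u - v| ≤ 4 * r)
    (hk : grrKernel a b γ φ u v ≤ 256 * B / r ^ 2) :
    |φ u - φ v| ≤ (256 * 4 ^ γ) ^ (1 / b) * B ^ (1 / b) * r ^ ((γ - 2) / b) := by
  have hpow : |φ u - φ v| ^ b ≤ 256 * 4 ^ γ * B * r ^ (γ - 2) := calc
    |φ u - φ v| ^ b = grrKernel a b γ φ u v * |u - v| ^ γ := abs_sub_rpow_eq_grrKernel_mul ha h₁
    _ ≤ 256 * B / r ^ 2 * (4 * r) ^ γ := by gcongr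
    _ = 256 * 4 ^ γ * B * r ^ (γ - 2) := by
      rw [mul_rpow (by norm_num) hr.le, rpow_sub hr, rpow_two]
      field_simp
  calc |φ u - φ v| = (|φ u - φ v| ^ b) ^ (1 / b) := by
        rw [one_div, rpow_rpow_inv (abs_nonneg _) hb.ne']
    _ ≤ (256 * 4 ^ γ * B * r ^ (γ - 2)) ^ (1 / b) := by gcongr
    _ = (256 * 4 ^ γ) ^ (1 / b) * B ^ (1 / b) * r ^ ((γ - 2) / b) := by
      rw [mul_rpow (by positivity) (by positivity), mul_rpow (by positivity) hB, ← rpow_mul hr.le,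
        mul_one_div]

theorem abs_sub_le_of_mem_window_of_mem_window_div_four (ha : 0 < a) (hb : 0 < b) (hγ : 0 ≤ γ)
    (hε : |ε| = 1) (hr : 0 < r) (hu : u ∈ window c ε r) (hv : v ∈ window c ε (r / 4))
    (har : 4 * a < 11 * (r / 4)) (hGu : grrMarginal T a b γ φ u ≤ 16 * Ba T b γ a φ / r)
    (hk : grrKernel a b γ φ u v ≤ 16 * grrMarginal T a b γ φ u / (r / 4)) :
    |φ u - φ v| ≤ (256 * 4 ^ γ) ^ (1 / b) * Ba T b γ a φ ^ (1 / b) * (r / 4) ^ ((γ - 2) / b) := by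
  have hB := Ba_nonneg (T := T) (b := b) (γ := γ) (a := a) (F := φ)
  have hsep := abs_sub_mem_Icc_of_mem_window hε hu hv
  refine abs_sub_le_of_grrKernel_le ha.le hb hγ hB (by positivity)
    (by linarith [hsep.1]) (by linarith [hsep.2]) (hk.trans ?_)
  calc 16 * grrMarginal T a b γ φ u / (r / 4)
      ≤ 16 * (16 * Ba T b γ a φ / r) / (r / 4) := by gcongr
    _ = 256 * Ba T b γ a φ / (r / 4) ^ 2 / 4 := by field_simp; ring
    _ ≤ 256 * Ba T b γ a φ / (r / 4) ^ 2 := div_le_self (by positivity) (by norm_num)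

theorem exists_seq_mem_window
    (hk : ∀ τ, IntegrableOn (grrKernel a b γ φ τ) (Icc 0 T))
    (hG : IntegrableOn (grrMarginal T a b γ φ) (Icc 0 T))
    (hε : |ε| = 1) (hr : 0 < r) (hW : ∀ n : ℕ, window c ε (r / 4 ^ n) ⊆ Icc 0 T)
    (hx₀ : x₀ ∈ window c ε r) (hGx₀ : grrMarginal T a b γ φ x₀ ≤ 16 * Ba T b γ a φ / r) :
    ∃ x : ℕ → ℝ, x 0 = x₀ ∧ ∀ n, x n ∈ window c ε (r / 4 ^ n) ∧
      grrMarginal T a b γ φ (x n) ≤ 16 * Ba T b γ a φ / (r / 4 ^ n) ∧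
      grrKernel a b γ φ (x n) (x (n + 1)) ≤
        16 * grrMarginal T a b γ φ (x n) / (r / 4 ^ (n + 1)) := by
  choose! next hnext using fun (n : ℕ) (p : ℝ) =>
    exists_mem_window_grrMarginal_le hk hG hε (by positivity) (hW (n + 1)) p
  let x : ℕ → ℝ := fun n => Nat.rec x₀ (fun n y => next n y) n
  have hx : ∀ n, x n ∈ window c ε (r / 4 ^ n) ∧
      grrMarginal T a b γ φ (x n) ≤ 16 * Ba T b γ a φ / (r / 4 ^ n) := by
    rintro (_ | n)
    · simpa using ⟨hx₀, hGx₀⟩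
    · exact ⟨(hnext n (x n)).1, (hnext n (x n)).2.1⟩
  exact ⟨x, rfl, fun n => ⟨(hx n).1, (hx n).2, (hnext n (x n)).2.2⟩⟩

theorem exists_abs_sub_le_of_mem_window
    (hk : ∀ τ, IntegrableOn (grrKernel a b γ φ τ) (Icc 0 T))
    (hG : IntegrableOn (grrMarginal T a b γ φ) (Icc 0 T))
    (ha : 0 < a) (hb : 0 < b) (hγ : 2 < γ) (hε : |ε| = 1) (har : a < r)
    (hW : uIcc c (c + ε * (4 * r)) ⊆ Icc 0 T)
    (hx₀ : x₀ ∈ window c ε r) (hGx₀ : grrMarginal T a b γ φ x₀ ≤ 16 * Ba T b γ a φ / r) :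
    ∃ z ∈ Icc 0 T, |z - c| ≤ 2 * a ∧ |φ x₀ - φ z| ≤
      (256 * 4 ^ γ) ^ (1 / b) * Ba T b γ a φ ^ (1 / b) *
        (r ^ ((γ - 2) / b) / (4 ^ ((γ - 2) / b) - 1)) := by
  have hr : 0 < r := ha.trans har
  have hr' : ∀ n : ℕ, r / 4 ^ (n + 1) = r / 4 ^ n / 4 := fun n => by rw [pow_succ, div_div]
  have hWn : ∀ n : ℕ, window c ε (r / 4 ^ n) ⊆ Icc 0 T := fun n =>
    (window_subset_uIcc hε (by
      have : r / 4 ^ n ≤ r := div_le_self hr.le (one_le_pow₀ (by norm_num))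
      linarith)).trans hW
  obtain ⟨x, rfl, hx⟩ := exists_seq_mem_window hk hG hε hr hWn hx₀ hGx₀
  -- The last level `r / 4 ^ m` lies in `[3a/8, 3a/2)`: consecutive levels down to it are still
  -- more than `a` apart, and its points are within `2a` of `c`.
  obtain ⟨m, hrm₁, hrm₂⟩ := exists_div_pow_mem_Ico (by positivity : 0 < 3 * a / 8)
    (by linarith : 3 * a / 8 ≤ r) (by norm_num : (1 : ℝ) < 4)
  refine ⟨x m, hWn m (hx m).1, (abs_sub_le_of_mem_window hε (hx m).1).trans (by linarith), ?_⟩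
  calc |φ (x 0) - φ (x m)| ≤ ∑ n ∈ Finset.range m, |φ (x n) - φ (x (n + 1))| := by
        simpa only [Real.dist_eq] using dist_le_range_sum_dist (fun n => φ (x n)) m
    _ ≤ ∑ n ∈ Finset.range m, (256 * 4 ^ γ) ^ (1 / b) * Ba T b γ a φ ^ (1 / b) *
          (r / 4 ^ (n + 1)) ^ ((γ - 2) / b) := by
      refine Finset.sum_le_sum fun n hn => ?_
      have : r / 4 ^ m ≤ r / 4 ^ (n + 1) :=
        div_le_div_of_nonneg_left hr.le (by positivity)
          (pow_le_pow_right₀ (by norm_num) (Finset.mem_range.1 hn))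
      obtain ⟨hxn, hGxn, hkxn⟩ := hx n
      rw [hr'] at this hkxn ⊢
      exact abs_sub_le_of_mem_window_of_mem_window_div_four ha hb (by linarith) hε
        (by positivity) hxn (hr' n ▸ (hx (n + 1)).1) (by linarith) hGxn hkxn
    _ ≤ _ := by
      rw [← Finset.mul_sum]
      exact mul_le_mul_of_nonneg_left
        (sum_range_rpow_div_four_pow_le hr.le (div_pos (sub_pos.2 hγ) hb) m)
        (mul_nonneg (by positivity) (rpow_nonneg Ba_nonneg _))

end Chaining

-- `16²` (two Chebyshev selections) and `4 ^ γ` (from `|u - v| ≤ 4r`) bound one chaining step; the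
-- bracket counts the middle step and the two geometric chains.
def grrConst (b γ : ℝ) : ℝ := (256 * 4 ^ γ) ^ (1 / b) * (1 + 2 / (4 ^ ((γ - 2) / b) - 1))

theorem grrConst_pos {b γ : ℝ} (hb : 0 < b) (hγ : 2 < γ) : 0 < grrConst b γ := by
  have : 1 < (4 : ℝ) ^ ((γ - 2) / b) := one_lt_rpow (by norm_num) (div_pos (by linarith) hb)
  have : 0 < 2 / ((4 : ℝ) ^ ((γ - 2) / b) - 1) := div_pos two_pos (by linarith)
  unfold grrConst
  positivity

theorem abs_sub_le_two_mul_of_abs_sub_le {f : ℝ → ℝ} {T a M s t : ℝ}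
    (hM : ∀ σ ∈ Icc 0 T, ∀ τ ∈ Icc 0 T, |τ - σ| ≤ 2 * a → |f τ - f σ| ≤ M)
    (hs : s ∈ Icc 0 T) (ht : t ∈ Icc 0 T) (hst : |t - s| ≤ 4 * a) : |f t - f s| ≤ 2 * M := by
  have hm : (s + t) / 2 ∈ Icc 0 T := ⟨by linarith [hs.1, ht.1], by linarith [hs.2, ht.2]⟩
  have h₁ := hM _ hm t ht (by
    rw [show t - (s + t) / 2 = (t - s) / 2 by ring, abs_div, abs_two]; linarith)
  have h₂ := hM s hs _ hm (by
    rw [show (s + t) / 2 - s = (t - s) / 2 by ring, abs_div, abs_two]; linarith)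
  calc |f t - f s| ≤ |f t - f ((s + t) / 2)| + |f ((s + t) / 2) - f s| := abs_sub_le _ _ _
    _ ≤ 2 * M := by linarith

section TwoSided

variable {T a b γ M r s t u v : ℝ} {φ : ℝ → ℝ}

theorem abs_sub_le_of_mem_window_of_mem_window_neg_one (ha : 0 < a) (hb : 0 < b) (hγ : 0 ≤ γ)
    (hd : t - s = 4 * r) (har : a < r) (hu : u ∈ window s 1 r) (hv : v ∈ window t (-1) r)
    (hGu : grrMarginal T a b γ φ u ≤ 16 * Ba T b γ a φ / r)
    (hk : grrKernel a b γ φ u v ≤ 16 * grrMarginal T a b γ φ u / r) :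
    |φ v - φ u| ≤ (256 * 4 ^ γ) ^ (1 / b) * Ba T b γ a φ ^ (1 / b) * r ^ ((γ - 2) / b) := by
  obtain ⟨⟨hu₁, hu₂⟩, ⟨hv₁, hv₂⟩⟩ := And.intro hu hv
  simp only [one_mul, neg_one_mul] at hu₁ hu₂ hv₁ hv₂
  have hr : 0 < r := ha.trans har
  refine abs_sub_le_of_grrKernel_le ha.le hb hγ Ba_nonneg hr
    (by rw [abs_of_pos (by linarith)]; linarith) (by rw [abs_of_pos (by linarith)]; linarith) ?_
  calc grrKernel a b γ φ v u = grrKernel a b γ φ u v := grrKernel_comm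
    _ ≤ 16 * (16 * Ba T b γ a φ / r) / r := hk.trans (by gcongr)
    _ = 256 * Ba T b γ a φ / r ^ 2 := by field_simp; ring

theorem abs_sub_le_of_four_mul_lt
    (hk : ∀ τ, IntegrableOn (grrKernel a b γ φ τ) (Icc 0 T))
    (hG : IntegrableOn (grrMarginal T a b γ φ) (Icc 0 T))
    (ha : 0 < a) (hb : 0 < b) (hγ : 2 < γ)
    (hM : ∀ σ ∈ Icc 0 T, ∀ τ ∈ Icc 0 T, |τ - σ| ≤ 2 * a → |φ τ - φ σ| ≤ M)
    (hs : s ∈ Icc 0 T) (ht : t ∈ Icc 0 T) (hst : 4 * a < t - s) :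
    |φ t - φ s| ≤ 2 * M + grrConst b γ * Ba T b γ a φ ^ (1 / b) * (t - s) ^ ((γ - 2) / b) := by
  set r := (t - s) / 4 with hr_def
  have hd : t - s = 4 * r := by rw [hr_def]; ring
  have har : a < r := by linarith
  have hr : 0 < r := ha.trans har
  have hWs : uIcc s (s + 1 * (4 * r)) ⊆ Icc 0 T := by
    rw [one_mul, ← hd, add_sub_cancel]; exact uIcc_subset_Icc hs ht
  have hWt : uIcc t (t + -1 * (4 * r)) ⊆ Icc 0 T := by
    rw [neg_one_mul, ← hd, ← sub_eq_add_neg, sub_sub_cancel, uIcc_comm]; exact uIcc_subset_Icc hs ht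
  have hε₁ : |(1 : ℝ)| = 1 := abs_one
  have hε₂ : |(-1 : ℝ)| = 1 := by simp
  obtain ⟨x₀, hx₀, hGx₀, -⟩ := exists_mem_window_grrMarginal_le hk hG hε₁ hr
    ((window_subset_uIcc hε₁ (by linarith)).trans hWs) s
  obtain ⟨y₀, hy₀, hGy₀, hkx₀y₀⟩ := exists_mem_window_grrMarginal_le hk hG hε₂ hr
    ((window_subset_uIcc hε₂ (by linarith)).trans hWt) x₀
  obtain ⟨zx, hzx, hzxs, hx⟩ :=
    exists_abs_sub_le_of_mem_window hk hG ha hb hγ hε₁ har hWs hx₀ hGx₀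
  obtain ⟨zy, hzy, hzyt, hy⟩ :=
    exists_abs_sub_le_of_mem_window hk hG ha hb hγ hε₂ har hWt hy₀ hGy₀
  have hcross := abs_sub_le_of_mem_window_of_mem_window_neg_one ha hb (by linarith) hd har
    hx₀ hy₀ hGx₀ hkx₀y₀
  have hzs := hM s hs zx hzx hzxs
  have hzt := hM zy hzy t ht (by rwa [abs_sub_comm])
  set e := (γ - 2) / b
  set L := (256 * 4 ^ γ) ^ (1 / b) * Ba T b γ a φ ^ (1 / b)
  have htotal : L * (r ^ e / (4 ^ e - 1)) + L * r ^ e + L * (r ^ e / (4 ^ e - 1)) ≤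
      grrConst b γ * Ba T b γ a φ ^ (1 / b) * (t - s) ^ e := calc
    _ = grrConst b γ * Ba T b γ a φ ^ (1 / b) * r ^ e := by simp only [L, grrConst]; ring
    _ ≤ _ := by
      have := grrConst_pos hb hγ
      have := rpow_nonneg (Ba_nonneg (T := T) (b := b) (γ := γ) (a := a) (F := φ)) (1 / b)
      gcongr
      linarith
  rw [abs_le] at hx hy hcross hzs hzt ⊢
  constructor <;> linarith

end TwoSided

theorem abs_sub_le_grrConst_mul {T a b γ K M σ τ : ℝ} {φ : ℝ → ℝ} (hφ : Measurable φ)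
    (hK : ∀ x, |φ x| ≤ K) (ha : 0 < a) (hb : 0 < b) (hγ : 2 < γ)
    (hM : ∀ σ ∈ Icc 0 T, ∀ τ ∈ Icc 0 T, |τ - σ| ≤ 2 * a → |φ τ - φ σ| ≤ M)
    (hσ : σ ∈ Icc 0 T) (hτ : τ ∈ Icc 0 T) :
    |φ τ - φ σ| ≤ 2 * M + grrConst b γ * Ba T b γ a φ ^ (1 / b) * |τ - σ| ^ ((γ - 2) / b) := by
  wlog hστ : σ ≤ τ generalizing σ τ
  · rw [abs_sub_comm (φ τ), abs_sub_comm τ]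
    exact this hτ hσ (le_of_not_ge hστ)
  rcases le_or_gt |τ - σ| (4 * a) with hshort | hlong
  · have := grrConst_pos hb hγ
    have := rpow_nonneg (Ba_nonneg (T := T) (b := b) (γ := γ) (a := a) (F := φ)) (1 / b)
    have : 0 ≤ grrConst b γ * Ba T b γ a φ ^ (1 / b) * |τ - σ| ^ ((γ - 2) / b) := by positivity
    linarith [abs_sub_le_two_mul_of_abs_sub_le hM hσ hτ hshort]
  · rw [abs_of_nonneg (sub_nonneg.2 hστ)] at hlong ⊢
    exact abs_sub_le_of_four_mul_lt (fun _ => integrableOn_grrKernel hφ hK ha hb.le (by linarith))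
      (integrableOn_grrMarginal hφ hK ha hb.le (by linarith)) ha hb hγ hM hσ hτ hlong

/-- modified Garsia–Rodemich–Rumsey inequality: for `b ≥ 4` and
`γ ∈ (2,3)` there is a constant `C > 0` depending only on `b, γ` such that for any
`T > 0`, any càdlàg `F : [0,T] → ℝ`, any `a > 0` and `δ > 0`,
`sup_{|τ-σ| ≤ δ} |F(τ) - F(σ)| ≤ 2 sup_{|τ-σ| ≤ 2a} |F(τ) - F(σ)| + C B_a(F)^{1/b} δ^{(γ-2)/b}`.
(The supremum over `|τ-σ| ≤ 2a` is represented by an arbitrary upper bound `M`.) -/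
theorem modified_GRR (b γ : ℝ) (hb : 4 ≤ b) (hγ : γ ∈ Set.Ioo (2 : ℝ) 3) :
    ∃ C > (0 : ℝ), ∀ T > (0 : ℝ), ∀ F : ℝ → ℝ,
      (∀ t ∈ Set.Ico (0 : ℝ) T, ContinuousWithinAt F (Set.Ici t) t) →
      (∀ t ∈ Set.Ioc (0 : ℝ) T, ∃ l : ℝ, Tendsto F (𝓝[<] t) (𝓝 l)) →
      ∀ a > (0 : ℝ), ∀ δ > (0 : ℝ), ∀ M : ℝ,
        (∀ σ ∈ Set.Icc (0 : ℝ) T, ∀ τ ∈ Set.Icc (0 : ℝ) T,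
          |τ - σ| ≤ 2 * a → |F τ - F σ| ≤ M) →
        ∀ σ ∈ Set.Icc (0 : ℝ) T, ∀ τ ∈ Set.Icc (0 : ℝ) T, |τ - σ| ≤ δ →
          |F τ - F σ| ≤ 2 * M + C * (Ba T b γ a F) ^ (1 / b) * δ ^ ((γ - 2) / b) := by
  have hb₀ : 0 < b := by linarith
  refine ⟨grrConst b γ, grrConst_pos hb₀ hγ.1, ?_⟩
  intro T hT F hr hl a ha δ _ M hM σ hσ τ hτ hστ
  obtain ⟨φ, hφ, ⟨K, hK⟩, hφF⟩ := exists_measurable_bounded_eqOn_Icc hT.le hr hl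
  have hMφ : ∀ σ ∈ Icc 0 T, ∀ τ ∈ Icc 0 T, |τ - σ| ≤ 2 * a → |φ τ - φ σ| ≤ M :=
    fun σ hσ τ hτ h => by rw [hφF hσ, hφF hτ]; exact hM σ hσ τ hτ h
  have := grrConst_pos hb₀ hγ.1
  have := rpow_nonneg (Ba_nonneg (T := T) (b := b) (γ := γ) (a := a) (F := φ)) (1 / b)
  calc |F τ - F σ| = |φ τ - φ σ| := by rw [hφF hσ, hφF hτ]
    _ ≤ 2 * M + grrConst b γ * Ba T b γ a φ ^ (1 / b) * |τ - σ| ^ ((γ - 2) / b) :=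
      abs_sub_le_grrConst_mul hφ hK ha hb₀ hγ.1 hMφ hσ hτ
    _ ≤ 2 * M + grrConst b γ * Ba T b γ a F ^ (1 / b) * δ ^ ((γ - 2) / b) := by
      rw [← Ba_congr hφF]
      gcongr
      exact div_nonneg (by linarith [hγ.1]) hb₀.le

end
end

section
/- Let d ≥ 1. For ε ∈ (0,1) and μ > 0 define I_N(ε) := ∫_{(𝕋^d)^N} ∏_{1≤i<j≤N} 1_{dist(x_i,x_j)>ε} dx_1⋯dx_N (with I_0 := 1), the partition function 𝒵(μ,ε) := Σ_{N≥0} (μ^N/N!) I_N(ε), and the mean particle number ⟨𝒩⟩(μ,ε) := 𝒵(μ,ε)^{−1} Σ_{N≥1} N (μ^N/N!) I_N(ε). Then for every family (μ_ε)_{ε>0} with μ_ε → ∞ and μ_ε ε^d → 0 as ε → 0, one has ⟨𝒩⟩(μ_ε,ε)/μ_ε → 1 as ε → 0. -/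
open scoped Classical

open MeasureTheory Real Filter Topology

noncomputable section

abbrev Torus (d : ℕ) := Fin d → UnitAddCircle

/-- The hard-sphere exclusion set `𝒟^ε_N`. -/
def excl (d : ℕ) (ε : ℝ) (N : ℕ) : Set (Fin N → Torus d) :=
  {X | ∀ i j, i ≠ j → ε < dist (X i) (X j)}

/-- `I_N(ε) = ∫_{(𝕋^d)^N} ∏_{i<j} 1_{dist(x_i,x_j) > ε} dX_N` (with `I_0 = 1`). -/
def exclInt (d : ℕ) (ε : ℝ) (N : ℕ) : ℝ := (volume (excl d ε N)).toReal

/-- The grand canonical partition function `𝒵(μ, ε)`. -/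
def partFun (d : ℕ) (ε μ : ℝ) : ℝ := ∑' N : ℕ, μ ^ N / N.factorial * exclInt d ε N

/-- The mean particle number `⟨𝒩⟩(μ, ε)`. -/
def meanN (d : ℕ) (ε μ : ℝ) : ℝ :=
  (partFun d ε μ)⁻¹ * ∑' N : ℕ, (N : ℝ) * (μ ^ N / N.factorial) * exclInt d ε N

/-!
Write `Z = ∑ μᴺ/N! I_N` and `G = ∑ μᴺ/N! I_{N+1}`; shifting the summation index in the numerator
gives `⟨𝒩⟩ = μ G / Z`. A new particle added to an admissible configuration of `N` particles only
has to avoid `N` balls of volume at most `(2ε)ᵈ`, so `(1 - N (2ε)ᵈ) I_N ≤ I_{N+1} ≤ I_N`, and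
summing against `μᴺ/N!` yields `G ≤ Z ≤ (1 + μ (2ε)ᵈ) G`. Hence `⟨𝒩⟩/μ` is squeezed between
`(1 + 2ᵈ μ εᵈ)⁻¹` and `1`.
-/

lemma summable_pow_div_factorial_mul {I : ℕ → ℝ} (m : ℝ) (hI : ∀ N, |I N| ≤ 1) :
    Summable fun N => m ^ N / N.factorial * I N := by
  refine (Real.summable_pow_div_factorial |m|).of_norm_bounded fun N => ?_
  rw [Real.norm_eq_abs, abs_mul, abs_div, abs_pow, Nat.abs_cast]
  exact mul_le_of_le_one_right (by positivity) (hI N)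

lemma hasSum_natCast_mul_pow_div_factorial_mul {I : ℕ → ℝ} {m G : ℝ}
    (h : HasSum (fun N => m ^ N / N.factorial * I (N + 1)) G) :
    HasSum (fun N : ℕ => (N : ℝ) * (m ^ N / N.factorial) * I N) (m * G) := by
  refine (hasSum_nat_add_iff' 1).1 ?_
  simp only [Finset.range_one, Finset.sum_singleton, Nat.cast_zero, zero_mul, sub_zero]
  have hshift : (fun N : ℕ => ((N + 1 : ℕ) : ℝ) * (m ^ (N + 1) / (N + 1).factorial) * I (N + 1)) =
      fun N => m * (m ^ N / N.factorial * I (N + 1)) := by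
    ext N
    rw [Nat.factorial_succ]
    push_cast
    field_simp
    ring
  rw [hshift]
  exact h.mul_left m

theorem inv_one_add_mul_le_mean_div_and_le_one {I : ℕ → ℝ} {m b : ℝ} (hb : 0 ≤ b) (hm : 0 < m)
    (hI_zero : I 0 = 1) (hI_nonneg : ∀ N, 0 ≤ I N) (hI_succ_le : ∀ N, I (N + 1) ≤ I N)
    (hI_succ_ge : ∀ N, (1 - N * b) * I N ≤ I (N + 1)) :
    (1 + m * b)⁻¹ ≤ (∑' N : ℕ, m ^ N / N.factorial * I N)⁻¹ *
        (∑' N : ℕ, (N : ℝ) * (m ^ N / N.factorial) * I N) / m ∧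
      (∑' N : ℕ, m ^ N / N.factorial * I N)⁻¹ *
        (∑' N : ℕ, (N : ℝ) * (m ^ N / N.factorial) * I N) / m ≤ 1 := by
  have hI_le_one : ∀ N, I N ≤ 1 := fun N => hI_zero ▸ antitone_nat_of_succ_le hI_succ_le N.zero_le
  have hI_abs : ∀ N, |I N| ≤ 1 := fun N => abs_le.2 ⟨by linarith [hI_nonneg N], hI_le_one N⟩
  have hcoef : ∀ N : ℕ, 0 ≤ m ^ N / N.factorial := fun N => by positivity
  obtain ⟨Z, hZ⟩ := summable_pow_div_factorial_mul m hI_abs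
  obtain ⟨G, hG⟩ := summable_pow_div_factorial_mul m fun N => hI_abs (N + 1)
  have hM := hasSum_natCast_mul_pow_div_factorial_mul hG
  have hZ_ge_one : 1 ≤ Z := by
    simpa [hI_zero, hZ.tsum_eq] using
      hZ.summable.le_tsum 0 fun N _ => mul_nonneg (hcoef N) (hI_nonneg N)
  have hG_le : G ≤ Z :=
    hasSum_le (fun N => mul_le_mul_of_nonneg_left (hI_succ_le N) (hcoef N)) hG hZ
  -- termwise, `mᴺ/N! I_N - b N mᴺ/N! I_N ≤ mᴺ/N! I_{N+1}`
  have hZ_le : Z - b * (m * G) ≤ G := by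
    refine hasSum_le (fun N => ?_) (hZ.sub (hM.mul_left b)) hG
    have := mul_le_mul_of_nonneg_left (hI_succ_ge N) (hcoef N)
    linarith
  have hZ_pos : 0 < Z := by linarith
  rw [hZ.tsum_eq, hM.tsum_eq, mul_div_assoc, mul_div_cancel_left₀ _ hm.ne', inv_mul_eq_div]
  constructor
  · rw [inv_le_iff_one_le_mul₀ (by positivity), div_mul_eq_mul_div, one_le_div hZ_pos]
    nlinarith
  · exact (div_le_one hZ_pos).2 hG_le

instance : IsProbabilityMeasure (volume : Measure UnitAddCircle) :=
  ⟨UnitAddCircle.measure_univ⟩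

lemma isOpen_excl (d : ℕ) (ε : ℝ) (N : ℕ) : IsOpen (excl d ε N) := by
  simp only [excl, Set.ofPred_forall]
  exact isOpen_iInter_of_finite fun i => isOpen_iInter_of_finite fun j =>
    isOpen_iInter_of_finite fun _ => isOpen_lt continuous_const (by fun_prop)

lemma excl_zero (d : ℕ) (ε : ℝ) : excl d ε 0 = Set.univ :=
  Set.eq_univ_of_forall fun _ i => i.elim0

lemma exclInt_zero (d : ℕ) (ε : ℝ) : exclInt d ε 0 = 1 := by
  simp [exclInt, excl_zero]

lemma volume_excl_succ (d : ℕ) (ε : ℝ) (N : ℕ) :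
    volume (excl d ε (N + 1)) =
      ∫⁻ Y in excl d ε N, volume {x : Torus d | ∀ i, ε < dist x (Y i)} := by
  set S : Set (Torus d × (Fin N → Torus d)) :=
    {p | p.2 ∈ excl d ε N ∧ ∀ i, ε < dist p.1 (p.2 i)}
  have hS : MeasurableSet S := by
    have hS_eq : S = Prod.snd ⁻¹' excl d ε N ∩ ⋂ i, {p | ε < dist p.1 (p.2 i)} := by
      ext
      simp [S]
    rw [hS_eq]
    exact ((isOpen_excl d ε N).preimage continuous_snd).inter
      (isOpen_iInter_of_finite fun i => isOpen_lt continuous_const (by fun_prop)) |>.measurableSet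
  have hsplit := measurePreserving_piFinSuccAbove
    (fun _ : Fin (N + 1) => (volume : Measure (Torus d))) (Fin.last N)
  have hpre : MeasurableEquiv.piFinSuccAbove (fun _ => Torus d) (Fin.last N) ⁻¹' S =
      excl d ε (N + 1) := by
    ext X
    simp only [Set.mem_preimage, MeasurableEquiv.piFinSuccAbove_apply, S, Set.mem_ofPred_eq,
      Fin.insertNthEquiv_symm_apply, Fin.removeNth, Fin.succAbove_last, excl]
    constructor
    · rintro ⟨hold, hnew⟩ i j hij
      induction i using Fin.lastCases with
      | last =>
        induction j using Fin.lastCases with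
        | last => exact absurd rfl hij
        | cast j => exact hnew j
      | cast i =>
        induction j using Fin.lastCases with
        | last => rw [dist_comm]; exact hnew i
        | cast j => exact hold i j (by simpa [Fin.castSucc_inj] using hij)
    · exact fun hX => ⟨fun i j hij => hX _ _ (by simpa using hij),
        fun i => hX _ _ (Fin.castSucc_lt_last i).ne'⟩
  rw [← hpre]
  refine (hsplit.measure_preimage hS.nullMeasurableSet).trans ?_
  rw [Measure.prod_apply_symm hS, ← lintegral_indicator (isOpen_excl d ε N).measurableSet]
  refine lintegral_congr fun Y => ?_
  by_cases hY : Y ∈ excl d ε N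
  · simp [S, hY, Set.indicator_of_mem]
  · simp [S, hY]

lemma volume_closedBall_torus_le {d : ℕ} {ε : ℝ} (hε : 0 ≤ ε) (y : Torus d) :
    volume (Metric.closedBall y ε) ≤ ENNReal.ofReal ((2 * ε) ^ d) := by
  rw [closedBall_pi _ hε, volume_pi_pi, ENNReal.ofReal_pow (by positivity)]
  calc ∏ i, volume (Metric.closedBall (y i) ε)
      ≤ ∏ _i : Fin d, ENNReal.ofReal (2 * ε) :=
        Finset.prod_le_prod' fun i _ => by
          rw [AddCircle.volume_closedBall]
          exact ENNReal.ofReal_le_ofReal (min_le_right _ _)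
    _ = ENNReal.ofReal (2 * ε) ^ d := by simp

lemma ofReal_one_sub_le_volume_far_from {d : ℕ} {ε : ℝ} (hε : 0 ≤ ε) {N : ℕ} (Y : Fin N → Torus d) :
    ENNReal.ofReal (1 - N * (2 * ε) ^ d) ≤ volume {x : Torus d | ∀ i, ε < dist x (Y i)} := by
  have hfar : {x : Torus d | ∀ i, ε < dist x (Y i)} = (⋃ i, Metric.closedBall (Y i) ε)ᶜ := by
    ext x
    simp
  have hballs : volume (⋃ i, Metric.closedBall (Y i) ε) ≤ N * ENNReal.ofReal ((2 * ε) ^ d) :=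
    calc volume (⋃ i, Metric.closedBall (Y i) ε)
        ≤ ∑ i, volume (Metric.closedBall (Y i) ε) := measure_iUnion_fintype_le _ _
      _ ≤ ∑ _i : Fin N, ENNReal.ofReal ((2 * ε) ^ d) :=
        Finset.sum_le_sum fun i _ => volume_closedBall_torus_le hε (Y i)
      _ = N * ENNReal.ofReal ((2 * ε) ^ d) := by simp
  rw [hfar, prob_compl_eq_one_sub (MeasurableSet.iUnion fun _ => measurableSet_closedBall),
    ENNReal.ofReal_sub _ (by positivity), ENNReal.ofReal_one, ENNReal.ofReal_mul (by positivity),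
    ENNReal.ofReal_natCast]
  exact tsub_le_tsub_left hballs 1

lemma exclInt_succ_le (d : ℕ) (ε : ℝ) (N : ℕ) : exclInt d ε (N + 1) ≤ exclInt d ε N := by
  refine ENNReal.toReal_mono (measure_ne_top _ _) ?_
  calc volume (excl d ε (N + 1))
      ≤ ∫⁻ _ in excl d ε N, 1 := by
        rw [volume_excl_succ]
        exact lintegral_mono fun _ => prob_le_one
    _ = volume (excl d ε N) := setLIntegral_one _

lemma exclInt_succ_ge {d : ℕ} {ε : ℝ} (hε : 0 ≤ ε) (N : ℕ) :
    (1 - N * (2 * ε) ^ d) * exclInt d ε N ≤ exclInt d ε (N + 1) := by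
  have key : ENNReal.ofReal (1 - N * (2 * ε) ^ d) * volume (excl d ε N) ≤
      volume (excl d ε (N + 1)) := by
    rw [volume_excl_succ, ← setLIntegral_const]
    exact lintegral_mono fun Y => ofReal_one_sub_le_volume_far_from hε Y
  calc (1 - N * (2 * ε) ^ d) * exclInt d ε N
      ≤ max (1 - N * (2 * ε) ^ d) 0 * exclInt d ε N :=
        mul_le_mul_of_nonneg_right (le_max_left _ _) ENNReal.toReal_nonneg
    _ = (ENNReal.ofReal (1 - N * (2 * ε) ^ d) * volume (excl d ε N)).toReal := by
        rw [ENNReal.toReal_mul, ENNReal.toReal_ofReal', exclInt]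
    _ ≤ exclInt d ε (N + 1) := ENNReal.toReal_mono (measure_ne_top _ _) key

theorem meanN_div_mu_tendsto_one_general (d : ℕ) (μ : ℝ → ℝ)
    (hμ : Tendsto μ (𝓝[>] (0 : ℝ)) atTop)
    (hμε : Tendsto (fun ε => μ ε * ε ^ d) (𝓝[>] (0 : ℝ)) (𝓝 0)) :
    Tendsto (fun ε => meanN d ε (μ ε) / μ ε) (𝓝[>] (0 : ℝ)) (𝓝 1) := by
  have hbounds : ∀ᶠ ε in 𝓝[>] (0 : ℝ), (1 + μ ε * (2 * ε) ^ d)⁻¹ ≤ meanN d ε (μ ε) / μ ε ∧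
      meanN d ε (μ ε) / μ ε ≤ 1 := by
    filter_upwards [self_mem_nhdsWithin, hμ.eventually_gt_atTop 0] with ε (hε : 0 < ε) hm
    exact inv_one_add_mul_le_mean_div_and_le_one (by positivity) hm (exclInt_zero d ε)
      (fun _ => ENNReal.toReal_nonneg) (exclInt_succ_le d ε) (exclInt_succ_ge hε.le)
  have hlower : Tendsto (fun ε => (1 + μ ε * (2 * ε) ^ d)⁻¹) (𝓝[>] (0 : ℝ)) (𝓝 1) := by
    have hsmall : Tendsto (fun ε => μ ε * (2 * ε) ^ d) (𝓝[>] (0 : ℝ)) (𝓝 0) := by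
      simpa [mul_pow, mul_left_comm] using hμε.const_mul (2 ^ d)
    simpa using (tendsto_const_nhds.add hsmall).inv₀ (by norm_num : (1 : ℝ) + 0 ≠ 0)
  exact tendsto_of_tendsto_of_tendsto_of_le_of_le' hlower tendsto_const_nhds
    (hbounds.mono fun _ h => h.1) (hbounds.mono fun _ h => h.2)

/-- for any family `μ_ε → ∞` with `μ_ε ε^d → 0`, the mean particle
number satisfies `⟨𝒩⟩(μ_ε, ε) / μ_ε → 1` as `ε → 0`. -/
theorem meanN_div_mu_tendsto_one (d : ℕ) (hd : 1 ≤ d) (μ : ℝ → ℝ)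
    (hμ : Tendsto μ (𝓝[>] (0 : ℝ)) atTop)
    (hμε : Tendsto (fun ε => μ ε * ε ^ d) (𝓝[>] (0 : ℝ)) (𝓝 0)) :
    Tendsto (fun ε => meanN d ε (μ ε) / μ ε) (𝓝[>] (0 : ℝ)) (𝓝 1) :=
  meanN_div_mu_tendsto_one_general d μ hμ hμε

end
end
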